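/- arXiv:2101.02610 — 3 statements merged into one kernel-verified Lean document; each statement's English description precedes it below -/
import Mathlib

section
/- Let (X, d, T) be a topological dynamical system, μ ∈ E_T(X), δ ∈ (0,1), ε > 0 and c ≥ 0. If for μ-a.e. x ∈ X one has liminf_{n→∞} −(1/n) log μ(B_n(x,ε)) ≥ c, then h_μ^K(ε/4, δ) ≥ c. In particular, the Katok entropy h_μ^K(ε/4, δ) is bounded below by the lower Brin–Katok local entropy h̲_μ^{BK}(ε) (the μ-a.e. constant value of x ↦ liminf_{n→∞} −(1/n) log μ(B_n(x,ε))). -/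
/-!
Fix `b < c`. Almost every `x` has `μ (B_n(x, ε)) ≤ e^{-bn}` for all large `n`, so for some `N`
the set `S` of points where this holds for every `n ≥ N` has measure `> 1 - δ/2`. A family of
`(n, ε/4)`-balls covering measure `> δ` then covers more than `δ/2` of `S`, while a ball
`B_n(y, ε/4)` meeting `S` at `x` lies inside `B_n(x, ε)` and so carries at most `e^{-bn}` of it.
Hence `N_μ^δ(n, ε/4) ≥ (δ/2) e^{bn}` for `n ≥ N`.
-/

open Filter MeasureTheory Set Topology

variable {X : Type*}

/-- The dynamical (Bowen) metric `d_n(x,y) = max_{0 ≤ k ≤ n-1} d(T^k x, T^k y)`. -/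
noncomputable def dynDist [MetricSpace X] (T : X → X) (n : ℕ) (x y : X) : ℝ :=
  ⨆ k ∈ Finset.range n, dist (T^[k] x) (T^[k] y)

/-- The open dynamical ball `B_n(x, ε) = {y : d_n(x,y) < ε}`. -/
def dynBall [MetricSpace X] (T : X → X) (n : ℕ) (x : X) (ε : ℝ) : Set X :=
  {y | dynDist T n x y < ε}

/-- `s_n(K, ε)`: the maximal cardinality of an `(n,ε)`-separated subset of `K`. -/
noncomputable def sepNum [MetricSpace X] (T : X → X) (n : ℕ) (K : Set X) (ε : ℝ) : ℕ :=
  sSup {m | ∃ E : Finset X, ↑E ⊆ K ∧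
    (∀ x ∈ E, ∀ y ∈ E, x ≠ y → ε < dynDist T n x y) ∧ E.card = m}

/-- `S(K, ε) = limsup_n (1/n) log s_n(K, ε)`. -/
noncomputable def sepEnt [MetricSpace X] (T : X → X) (K : Set X) (ε : ℝ) : EReal :=
  limsup (fun n : ℕ => ((Real.log (sepNum T n K ε) / n : ℝ) : EReal)) atTop

/-- `r_n(K, ε)`: the minimal cardinality of an `(n,ε)`-spanning set for `K`. -/
noncomputable def spanNum [MetricSpace X] (T : X → X) (n : ℕ) (K : Set X) (ε : ℝ) : ℕ :=
  sInf {m | ∃ F : Finset X, (∀ x ∈ K, ∃ y ∈ F, dynDist T n x y ≤ ε) ∧ F.card = m}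

/-- `R(K, ε) = limsup_n (1/n) log r_n(K, ε)`. -/
noncomputable def spanEnt [MetricSpace X] (T : X → X) (K : Set X) (ε : ℝ) : EReal :=
  limsup (fun n : ℕ => ((Real.log (spanNum T n K ε) / n : ℝ) : EReal)) atTop

/-- Upper metric mean dimension. -/
noncomputable def mdimUpper [MetricSpace X] (T : X → X) : EReal :=
  limsup (fun ε : ℝ => sepEnt T univ ε / ((Real.log (1 / ε) : ℝ) : EReal)) (𝓝[>] (0:ℝ))

/-- Lower metric mean dimension. -/
noncomputable def mdimLower [MetricSpace X] (T : X → X) : EReal :=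
  liminf (fun ε : ℝ => sepEnt T univ ε / ((Real.log (1 / ε) : ℝ) : EReal)) (𝓝[>] (0:ℝ))

/-- The ergodic `T`-invariant Borel probability measures. -/
def ergodicMeasures [MeasurableSpace X] (T : X → X) : Set (Measure X) :=
  {μ | IsProbabilityMeasure μ ∧ Ergodic T μ}

/-- `U` is a finite open cover of `X`. -/
def IsFiniteOpenCover [TopologicalSpace X] (U : Finset (Set X)) : Prop :=
  (∀ V ∈ U, IsOpen V) ∧ ⋃₀ (U : Set (Set X)) = univ

/-- The cover `U^n = ⋁_{i=0}^{n-1} T^{-i} U`. -/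
def dynRefine (T : X → X) (U : Finset (Set X)) (n : ℕ) : Set (Set X) :=
  {V | ∃ f : Fin n → Set X, (∀ i, f i ∈ U) ∧ V = ⋂ i : Fin n, T^[(i : ℕ)] ⁻¹' f i}

/-- `N(C)`: the minimal cardinality of a subcover of `C`. -/
noncomputable def coverNum (C : Set (Set X)) : ℕ :=
  sInf {m | ∃ F : Finset (Set X), ↑F ⊆ C ∧ ⋃₀ (F : Set (Set X)) = univ ∧ F.card = m}

/-- `N_μ(U^n, δ)`: minimal number of members of `U^n` needed to cover a set of measure ≥ δ. -/
noncomputable def shapiraNum [MeasurableSpace X] (T : X → X) (μ : Measure X)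
    (U : Finset (Set X)) (n : ℕ) (δ : ℝ) : ℕ :=
  sInf {m | ∃ F : Finset (Set X), ↑F ⊆ dynRefine T U n ∧
    ENNReal.ofReal δ ≤ μ (⋃₀ (F : Set (Set X))) ∧ F.card = m}

/-- Shapira's entropy `h_μ^S(U, δ) = limsup_n (1/n) log N_μ(U^n, δ)`. -/
noncomputable def shapiraEnt [MeasurableSpace X] (T : X → X) (μ : Measure X)
    (U : Finset (Set X)) (δ : ℝ) : EReal :=
  limsup (fun n : ℕ => ((Real.log (shapiraNum T μ U n δ) / n : ℝ) : EReal)) atTop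

/-- `N_μ^δ(n, ε)`: smallest number of open `(n,ε)`-dynamical balls whose union has
measure `> δ`. -/
noncomputable def katokNum [MetricSpace X] [MeasurableSpace X] (T : X → X) (μ : Measure X)
    (n : ℕ) (ε δ : ℝ) : ℕ :=
  sInf {m | ∃ F : Finset X, ENNReal.ofReal δ < μ (⋃ x ∈ F, dynBall T n x ε) ∧ F.card = m}

/-- Katok's entropy `h_μ^K(ε, δ) = limsup_n (1/n) log N_μ^δ(n, ε)`. -/
noncomputable def katokEnt [MetricSpace X] [MeasurableSpace X] (T : X → X) (μ : Measure X)
    (ε δ : ℝ) : EReal :=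
  limsup (fun n : ℕ => ((Real.log (katokNum T μ n ε δ) / n : ℝ) : EReal)) atTop

/-- Lower Katok entropy `h̲_μ^K(ε, δ) = liminf_n (1/n) log N_μ^δ(n, ε)`. -/
noncomputable def katokEntLower [MetricSpace X] [MeasurableSpace X] (T : X → X) (μ : Measure X)
    (ε δ : ℝ) : EReal :=
  liminf (fun n : ℕ => ((Real.log (katokNum T μ n ε δ) / n : ℝ) : EReal)) atTop

/-- `Ñ_μ^δ(n, ε)`: smallest number of sets of `d_n`-diameter ≤ ε whose union has
measure `> δ`. -/
noncomputable def katokNumTilde [MetricSpace X] [MeasurableSpace X] (T : X → X) (μ : Measure X)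
    (n : ℕ) (ε δ : ℝ) : ℕ :=
  sInf {m | ∃ F : Finset (Set X), (∀ A ∈ F, ∀ x ∈ A, ∀ y ∈ A, dynDist T n x y ≤ ε) ∧
    ENNReal.ofReal δ < μ (⋃₀ (F : Set (Set X))) ∧ F.card = m}

/-- Brin–Katok local entropy `h_μ^{BK}(x, ε) = limsup_n -(1/n) log μ(B_n(x, ε))`. -/
noncomputable def brinKatok [MetricSpace X] [MeasurableSpace X] (T : X → X) (μ : Measure X)
    (x : X) (ε : ℝ) : EReal :=
  limsup (fun n : ℕ => -(ENNReal.log (μ (dynBall T n x ε))) / (n : EReal)) atTop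

/-- Lower Brin–Katok local entropy `h̲_μ^{BK}(x, ε) = liminf_n -(1/n) log μ(B_n(x, ε))`. -/
noncomputable def brinKatokLower [MetricSpace X] [MeasurableSpace X] (T : X → X) (μ : Measure X)
    (x : X) (ε : ℝ) : EReal :=
  liminf (fun n : ℕ => -(ENNReal.log (μ (dynBall T n x ε))) / (n : EReal)) atTop

/-- Local entropy function `h_d(x, ε) = inf { S(K, ε) : K closed neighborhood of x }`. -/
noncomputable def locEnt [MetricSpace X] (T : X → X) (x : X) (ε : ℝ) : EReal :=
  ⨅ K ∈ {K : Set X | IsClosed K ∧ K ∈ 𝓝 x}, sepEnt T K ε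

/-- Local spanning entropy `h̃_d(x, ε) = inf { R(K, ε) : K closed neighborhood of x }`. -/
noncomputable def locSpanEnt [MetricSpace X] (T : X → X) (x : X) (ε : ℝ) : EReal :=
  ⨅ K ∈ {K : Set X | IsClosed K ∧ K ∈ 𝓝 x}, spanEnt T K ε

/-- `U_x^n`: the union of all cells of `U^n` containing `x`. -/
def dynCoverCell (T : X → X) (U : Finset (Set X)) (n : ℕ) (x : X) : Set X :=
  ⋃₀ {V | V ∈ dynRefine T U n ∧ x ∈ V}

open scoped ENNReal

section DynamicalMetric

variable [MetricSpace X] {T : X → X} {n : ℕ}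

lemma dynDist_nonneg (x y : X) : 0 ≤ dynDist T n x y :=
  Real.iSup_nonneg fun _ => Real.iSup_nonneg fun _ => dist_nonneg

lemma dist_iterate_le_dynDist {k : ℕ} (hk : k < n) (x y : X) :
    dist (T^[k] x) (T^[k] y) ≤ dynDist T n x y := by
  set d := fun j => dist (T^[j] x) (T^[j] y)
  have hbdd : BddAbove (range fun j => ⨆ _ : j ∈ Finset.range n, d j) := by
    refine ⟨∑ j ∈ Finset.range n, d j, ?_⟩
    rintro _ ⟨j, rfl⟩
    exact Real.iSup_le (fun hj => Finset.single_le_sum (f := d) (fun i _ => dist_nonneg) hj)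
      (Finset.sum_nonneg fun _ _ => dist_nonneg)
  calc d k = ⨆ _ : k ∈ Finset.range n, d k := (ciSup_pos (f := fun _ => d k) (by simpa)).symm
    _ ≤ dynDist T n x y := le_ciSup hbdd k

lemma dynDist_le_of_forall {x y : X} {a : ℝ} (ha : 0 ≤ a)
    (h : ∀ k < n, dist (T^[k] x) (T^[k] y) ≤ a) : dynDist T n x y ≤ a :=
  Real.iSup_le (fun k => Real.iSup_le (fun hk => h k (Finset.mem_range.1 hk)) ha) ha

lemma dynDist_self (x : X) : dynDist T n x x = 0 :=
  le_antisymm (dynDist_le_of_forall le_rfl (by simp)) (dynDist_nonneg x x)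

lemma dynDist_comm (x y : X) : dynDist T n x y = dynDist T n y x := by
  simp only [dynDist, dist_comm]

lemma dynDist_triangle (x y z : X) : dynDist T n x z ≤ dynDist T n x y + dynDist T n y z :=
  dynDist_le_of_forall (add_nonneg (dynDist_nonneg x y) (dynDist_nonneg y z))
    fun k hk => (dist_triangle _ (T^[k] y) _).trans
      (add_le_add (dist_iterate_le_dynDist hk x y) (dist_iterate_le_dynDist hk y z))

lemma dynDist_lt_iff {x y : X} {ε : ℝ} (hε : 0 < ε) :
    dynDist T n x y < ε ↔ ∀ k < n, dist (T^[k] x) (T^[k] y) < ε := by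
  refine ⟨fun h k hk => (dist_iterate_le_dynDist hk x y).trans_lt h, fun h => ?_⟩
  set s := insert 0 ((Finset.range n).image fun k => dist (T^[k] x) (T^[k] y))
  have hs : s.max' (Finset.insert_nonempty _ _) < ε := by
    simpa [s, Finset.max'_lt_iff, hε] using h
  refine (dynDist_le_of_forall (s.le_max' 0 (Finset.mem_insert_self _ _))
    fun k hk => s.le_max' _ ?_).trans_lt hs
  exact Finset.mem_insert_of_mem (Finset.mem_image_of_mem _ (Finset.mem_range.2 hk))

end DynamicalMetric

section DynamicalBall

variable [MetricSpace X] {T : X → X} {n : ℕ} {x y : X} {ρ ε : ℝ}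

lemma mem_dynBall_self (hε : 0 < ε) : x ∈ dynBall T n x ε := by
  simpa [dynBall, dynDist_self] using hε

lemma isOpen_dynBall (hT : Continuous T) (hε : 0 < ε) : IsOpen (dynBall T n x ε) := by
  have : dynBall T n x ε = ⋂ k ∈ Finset.range n, T^[k] ⁻¹' Metric.ball (T^[k] x) ε := by
    ext y
    simp [dynBall, dynDist_lt_iff hε, dist_comm]
  rw [this]
  exact isOpen_biInter_finset fun k _ => Metric.isOpen_ball.preimage (hT.iterate k)

lemma dynBall_subset_dynBall (hx : x ∈ dynBall T n y ρ) (hρε : 2 * ρ ≤ ε) :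
    dynBall T n y ρ ⊆ dynBall T n x ε := fun z hz => by
  have hxz := dynDist_triangle (T := T) (n := n) x y z
  simp only [dynBall, mem_ofPred_eq, dynDist_comm y x] at hx hz ⊢
  linarith

end DynamicalBall

lemma ENNReal.le_ofReal_exp_of_lt_neg_log_div {a : ℝ≥0∞} {b : ℝ} {n : ℕ} (hn : 0 < n)
    (h : (b : EReal) < -ENNReal.log a / n) : a ≤ ENNReal.ofReal (Real.exp (-(b * n))) := by
  have hn' : (0 : EReal) < n := by exact_mod_cast hn
  rw [EReal.lt_div_iff hn' (EReal.natCast_ne_top n), EReal.lt_neg_comm] at h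
  calc a = EReal.exp (ENNReal.log a) := (ENNReal.exp_log a).symm
    _ ≤ EReal.exp ((-(b * n) : ℝ) : EReal) := EReal.exp_monotone (by simpa using h.le)
    _ = ENNReal.ofReal (Real.exp (-(b * n))) := EReal.exp_coe _

lemma eventually_le_ofReal_exp_of_lt_liminf {a : ℕ → ℝ≥0∞} {b : ℝ}
    (h : (b : EReal) < liminf (fun n : ℕ => -ENNReal.log (a n) / n) atTop) :
    ∀ᶠ n in atTop, a n ≤ ENNReal.ofReal (Real.exp (-(b * n))) := by
  filter_upwards [eventually_lt_of_lt_liminf h, eventually_gt_atTop 0] with n hn hn0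
  exact ENNReal.le_ofReal_exp_of_lt_neg_log_div hn0 hn

lemma le_limsup_log_div_of_eventually_le {u : ℕ → ℝ} {a b : ℝ} (ha : 0 < a)
    (h : ∀ᶠ n : ℕ in atTop, a * Real.exp (b * n) ≤ u n) :
    (b : EReal) ≤ limsup (fun n : ℕ => ((Real.log (u n) / n : ℝ) : EReal)) atTop := by
  have hlim : Tendsto (fun n : ℕ => ((Real.log a / n + b : ℝ) : EReal)) atTop (𝓝 b) := by
    rw [EReal.tendsto_coe]
    simpa using (tendsto_const_div_atTop_nhds_zero_nat (Real.log a)).add_const b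
  rw [← hlim.limsup_eq]
  refine limsup_le_limsup ?_
  filter_upwards [h, eventually_gt_atTop 0] with n hn hn0
  have hlog : Real.log a + b * n ≤ Real.log (u n) := by
    rw [← Real.log_exp (b * n), ← Real.log_mul ha.ne' (Real.exp_pos _).ne']
    exact Real.log_le_log (by positivity) hn
  have hn0' : (0 : ℝ) < n := by exact_mod_cast hn0
  rw [EReal.coe_le_coe_iff, div_add' _ _ _ hn0'.ne', div_le_div_iff_of_pos_right hn0']
  exact hlog

lemma tendsto_measure_setOf_forall_ge {α : Type*} [MeasurableSpace α] {μ : Measure α}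
    {P : ℕ → α → Prop} (h : ∀ᵐ x ∂μ, ∀ᶠ n in atTop, P n x) :
    Tendsto (fun N => μ {x | ∀ n ≥ N, P n x}) atTop (𝓝 (μ univ)) := by
  have hmono : Monotone fun N => {x | ∀ n ≥ N, P n x} :=
    fun N M hNM x hx n hn => hx n (hNM.trans hn)
  have hunion : μ (⋃ N, {x | ∀ n ≥ N, P n x}) = μ univ := by
    refine measure_congr (ae_eq_univ.2 (measure_mono_null ?_ (ae_iff.1 h)))
    intro x hx
    simpa [eventually_atTop] using hx
  rw [← hunion]
  exact tendsto_measure_iUnion_atTop hmono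

section KatokNumber

variable [MetricSpace X] [MeasurableSpace X] {T : X → X} {μ : Measure X} {n : ℕ}
  {ρ ε δ b : ℝ}

lemma exists_card_eq_katokNum [CompactSpace X] [IsProbabilityMeasure μ] (hT : Continuous T)
    (hρ : 0 < ρ) (hδ : δ < 1) :
    ∃ F : Finset X, ENNReal.ofReal δ < μ (⋃ x ∈ F, dynBall T n x ρ) ∧
      F.card = katokNum T μ n ρ δ := by
  obtain ⟨t, ht⟩ := isCompact_univ.elim_finite_subcover (fun x => dynBall T n x ρ)
    (fun x => isOpen_dynBall hT hρ) (fun x _ => mem_iUnion.2 ⟨x, mem_dynBall_self hρ⟩)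
  refine Nat.sInf_mem (s := {m | ∃ F : Finset X,
    ENNReal.ofReal δ < μ (⋃ x ∈ F, dynBall T n x ρ) ∧ F.card = m}) ⟨t.card, t, ?_, rfl⟩
  rw [univ_subset_iff.1 ht, measure_univ]
  exact ENNReal.ofReal_lt_one.2 hδ

lemma measure_inter_biUnion_dynBall_le {S : Set X} {r : ℝ≥0∞}
    (hS : ∀ x ∈ S, μ (dynBall T n x ε) ≤ r) (hρε : 2 * ρ ≤ ε) (F : Finset X) :
    μ (S ∩ ⋃ y ∈ F, dynBall T n y ρ) ≤ F.card * r := by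
  calc μ (S ∩ ⋃ y ∈ F, dynBall T n y ρ) ≤ ∑ y ∈ F, μ (S ∩ dynBall T n y ρ) := by
        rw [inter_iUnion₂]
        exact measure_biUnion_finset_le F _
    _ ≤ ∑ _ ∈ F, r := Finset.sum_le_sum fun y _ => ?_
    _ = F.card * r := by simp
  rcases (S ∩ dynBall T n y ρ).eq_empty_or_nonempty with he | ⟨x, hxS, hxy⟩
  · simp [he]
  · exact (measure_mono (inter_subset_right.trans (dynBall_subset_dynBall hxy hρε))).trans
      (hS x hxS)

lemma measure_add_lt_katokNum_mul [CompactSpace X] [BorelSpace X] [IsProbabilityMeasure μ]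
    (hT : Continuous T) (hρ : 0 < ρ) (hδ : δ < 1) (hρε : 2 * ρ ≤ ε) {S : Set X} {r : ℝ≥0∞}
    (hS : ∀ x ∈ S, μ (dynBall T n x ε) ≤ r) :
    μ S + ENNReal.ofReal δ < katokNum T μ n ρ δ * r + 1 := by
  obtain ⟨F, hF, hcard⟩ := exists_card_eq_katokNum (n := n) (μ := μ) hT hρ hδ
  set U := ⋃ y ∈ F, dynBall T n y ρ
  have hU : MeasurableSet U := (isOpen_biUnion fun y _ => isOpen_dynBall hT hρ).measurableSet
  calc μ S + ENNReal.ofReal δ < μ (S ∩ U) + (μ (S \ U) + μ U) := by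
        rw [← add_assoc, measure_inter_add_sdiff S hU]
        exact ENNReal.add_lt_add_left (measure_ne_top μ S) hF
    _ ≤ katokNum T μ n ρ δ * r + 1 := by
        rw [← hcard, ← measure_univ (μ := μ), ← measure_add_measure_compl hU, add_comm (μ U)]
        gcongr
        · exact measure_inter_biUnion_dynBall_le hS hρε F
        · exact sdiff_subset_compl S U

lemma half_mul_exp_le_katokNum [CompactSpace X] [BorelSpace X] [IsProbabilityMeasure μ]
    (hT : Continuous T) (hρ : 0 < ρ) (hρε : 2 * ρ ≤ ε) (hδ : δ ∈ Ioo 0 1) {S : Set X}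
    (hS : ENNReal.ofReal (1 - δ / 2) < μ S)
    (hSb : ∀ x ∈ S, μ (dynBall T n x ε) ≤ ENNReal.ofReal (Real.exp (-(b * n)))) :
    δ / 2 * Real.exp (b * n) ≤ katokNum T μ n ρ δ := by
  have key := (ENNReal.add_lt_add_right ENNReal.ofReal_ne_top hS).trans
    (measure_add_lt_katokNum_mul hT hρ hδ.2 hρε hSb)
  rw [← ENNReal.ofReal_add (by linarith [hδ.2]) hδ.1.le, ← ENNReal.ofReal_natCast,
    ← ENNReal.ofReal_mul (Nat.cast_nonneg _), ← ENNReal.ofReal_one,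
    ← ENNReal.ofReal_add (by positivity) zero_le_one, ENNReal.ofReal_lt_ofReal_iff (by positivity),
    Real.exp_neg, ← div_eq_mul_inv] at key
  rw [← le_div_iff₀ (Real.exp_pos _)]
  linarith

end KatokNumber

section Theorems

variable [MetricSpace X] [CompactSpace X] [Nonempty X] [MeasurableSpace X] [BorelSpace X]

theorem katokEnt_ge_of_ae_le_brinKatokLower_general (T : X → X) (hT : IsHomeomorph T)
    (μ : Measure X) (hμ : μ ∈ ergodicMeasures T)
    (δ : ℝ) (hδ : δ ∈ Set.Ioo (0:ℝ) 1) (ε : ℝ) (hε : 0 < ε)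
    (c : ℝ)
    (h : ∀ᵐ x ∂μ, (c : EReal) ≤ brinKatokLower T μ x ε) :
    (c : EReal) ≤ katokEnt T μ (ε / 4) δ := by
  have : IsProbabilityMeasure μ := hμ.1
  refine EReal.ge_of_forall_gt_iff_ge.1 fun b hb => ?_
  have hS := tendsto_measure_setOf_forall_ge (h.mono fun x hx =>
    eventually_le_ofReal_exp_of_lt_liminf (hb.trans_le hx))
  rw [measure_univ] at hS
  obtain ⟨N, hN⟩ := (hS.eventually (lt_mem_nhds (ENNReal.ofReal_lt_one.2
    (by linarith [hδ.1] : 1 - δ / 2 < 1)))).exists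
  refine le_limsup_log_div_of_eventually_le (half_pos hδ.1) ?_
  filter_upwards [eventually_ge_atTop N] with n hn
  exact half_mul_exp_le_katokNum hT.continuous (by positivity) (by linarith) hδ hN
    fun x hx => hx n hn

/-- Katok's entropy at scale `ε/4` is bounded below by any μ-a.e. lower bound `c` on the
lower Brin-Katok local entropy at scale `ε` (Proposition 5.1). -/
theorem katokEnt_ge_of_ae_le_brinKatokLower (T : X → X) (hT : IsHomeomorph T)
    (μ : Measure X) (hμ : μ ∈ ergodicMeasures T)
    (δ : ℝ) (hδ : δ ∈ Set.Ioo (0:ℝ) 1) (ε : ℝ) (hε : 0 < ε)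
    (c : ℝ) (hc : 0 ≤ c)
    (h : ∀ᵐ x ∂μ, (c : EReal) ≤ brinKatokLower T μ x ε) :
    (c : EReal) ≤ katokEnt T μ (ε / 4) δ :=
  katokEnt_ge_of_ae_le_brinKatokLower_general T hT μ hμ δ hδ ε hε c h

end Theorems
end

section
/- Let (X, d, T) be a topological dynamical system. Then the upper metric mean dimension satisfies mdim̄_M(X,d,T) = limsup_{ε→0} (1/log(1/ε)) · sup_{x ∈ X} h_d(x, ε), where h_d is the local entropy function. -/
open Filter MeasureTheory Set Topology

variable {X : Type*}

/-! For fixed `ε > 0` one already has `S(X, ε) = sup_x h_d(x, ε)`. Cover `X` by finitely many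
closed neighbourhoods `K_i` of points `x_i` with `S(K_i, ε)` close to `h_d(x_i, ε)`. An
`(n, ε)`-separated subset of `X` splits into `(n, ε)`-separated subsets of the `K_i`, so
`s_n(X, ε) ≤ ∑ᵢ s_n(K_i, ε)`, and the exponential growth rate of a finite sum of sequences is
the largest of their rates. -/

open ExpGrowth
open scoped ENNReal

section SeparatedSets

variable [MetricSpace X] {T : X → X} {n : ℕ} {ε : ℝ} {K L : Set X}

lemma dynDist_le_of_forall_lt {x y : X} {r : ℝ} (hr : 0 ≤ r)
    (h : ∀ k < n, dist (T^[k] x) (T^[k] y) ≤ r) : dynDist T n x y ≤ r :=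
  Real.iSup_le (fun k => Real.iSup_le (fun hk => h k (Finset.mem_range.1 hk)) hr) hr

variable [CompactSpace X]

/-- A separated set injects into `t^n`, where `t` is a finite `ε/2`-net of `X`, by sending `x`
to a choice of net points near `x, T x, …, T^{n-1} x`. -/
lemma bddAbove_card_dynSeparated (hε : 0 < ε) :
    BddAbove {m | ∃ E : Finset X, ↑E ⊆ K ∧
      (E : Set X).Pairwise (fun x y => ε < dynDist T n x y) ∧ E.card = m} := by
  obtain ⟨t, -, htf, htc⟩ := finite_cover_balls_of_compact (isCompact_univ (X := X)) (half_pos hε)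
  have hnet : ∀ z : X, ∃ w ∈ htf.toFinset, dist z w < ε / 2 := fun z => by
    simpa using htc (mem_univ z)
  choose c hc_mem hc_dist using hnet
  refine ⟨(Fintype.piFinset fun _ : Fin n => htf.toFinset).card, ?_⟩
  rintro m ⟨E, -, hE, rfl⟩
  refine Finset.card_le_card_of_injOn (fun z (i : Fin n) => c (T^[i] z))
    (fun z _ => Fintype.mem_piFinset.2 fun i => hc_mem _) fun x hx y hy hxy => ?_
  by_contra hne
  refine (hE hx hy hne).not_ge (dynDist_le_of_forall_lt hε.le fun k hk => ?_)
  have hcode : c (T^[k] x) = c (T^[k] y) := congrFun hxy ⟨k, hk⟩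
  calc dist (T^[k] x) (T^[k] y)
      ≤ dist (T^[k] x) (c (T^[k] x)) + dist (T^[k] y) (c (T^[k] y)) := by
        rw [hcode, dist_comm (T^[k] y)]; exact dist_triangle _ _ _
    _ ≤ ε := by linarith [hc_dist (T^[k] x), hc_dist (T^[k] y)]

lemma le_sepNum (hε : 0 < ε) {E : Finset X} (hEK : ↑E ⊆ K)
    (hE : (E : Set X).Pairwise (fun x y => ε < dynDist T n x y)) :
    E.card ≤ sepNum T n K ε :=
  le_csSup (bddAbove_card_dynSeparated hε) ⟨E, hEK, hE, rfl⟩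

lemma exists_card_eq_sepNum (hε : 0 < ε) :
    ∃ E : Finset X, ↑E ⊆ K ∧ (E : Set X).Pairwise (fun x y => ε < dynDist T n x y) ∧
      E.card = sepNum T n K ε :=
  Nat.sSup_mem (s := {m | ∃ E : Finset X, (E : Set X) ⊆ K ∧
      (E : Set X).Pairwise (fun x y => ε < dynDist T n x y) ∧ E.card = m})
    ⟨0, ∅, by simp⟩ (bddAbove_card_dynSeparated hε)

lemma one_le_sepNum (hε : 0 < ε) (hK : K.Nonempty) : 1 ≤ sepNum T n K ε := by
  obtain ⟨x, hx⟩ := hK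
  simpa using le_sepNum (T := T) (n := n) hε (E := {x}) (by simpa using hx)
    (by simp only [Finset.coe_singleton, Set.pairwise_singleton])

lemma sepNum_le_sum_of_subset_biUnion {ι : Type*} (hε : 0 < ε) {s : Finset ι}
    {K : ι → Set X} (hL : L ⊆ ⋃ i ∈ s, K i) :
    sepNum T n L ε ≤ ∑ i ∈ s, sepNum T n (K i) ε := by
  classical
  obtain ⟨E, hEL, hE, hcard⟩ := exists_card_eq_sepNum (T := T) (n := n) hε (K := L)
  have hsplit : E ⊆ s.biUnion fun i => E.filter (· ∈ K i) := fun z hz => by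
    obtain ⟨i, hi, hzi⟩ := mem_iUnion₂.1 (hL (hEL hz))
    exact Finset.mem_biUnion.2 ⟨i, hi, Finset.mem_filter.2 ⟨hz, hzi⟩⟩
  calc sepNum T n L ε = E.card := hcard.symm
    _ ≤ ∑ i ∈ s, (E.filter (· ∈ K i)).card :=
      (Finset.card_le_card hsplit).trans Finset.card_biUnion_le
    _ ≤ ∑ i ∈ s, sepNum T n (K i) ε := Finset.sum_le_sum fun i _ =>
      le_sepNum hε (fun z hz => (Finset.mem_filter.1 hz).2)
        (hE.mono (Finset.coe_subset.2 (Finset.filter_subset _ _)))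

/-- `K` must be nonempty: `Real.log 0 = 0`, whereas `ENNReal.log 0 = ⊥`. -/
lemma sepEnt_eq_expGrowthSup (hε : 0 < ε) (hK : K.Nonempty) :
    sepEnt T K ε = expGrowthSup (fun n => (sepNum T n K ε : ℝ≥0∞)) := by
  refine congrArg (limsup · atTop) (funext fun n => ?_)
  have hpos : (0 : ℝ) < sepNum T n K ε := by exact_mod_cast one_le_sepNum hε hK
  dsimp only
  rw [EReal.coe_div, ← ENNReal.ofReal_natCast (sepNum T n K ε), ENNReal.log_ofReal_of_pos hpos,
    EReal.coe_coe_eq_natCast]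

lemma sepEnt_le_biSup_of_subset_biUnion {ι : Type*} (hε : 0 < ε) {s : Finset ι}
    {K : ι → Set X} (hL : L ⊆ ⋃ i ∈ s, K i) (hLne : L.Nonempty)
    (hK : ∀ i ∈ s, (K i).Nonempty) :
    sepEnt T L ε ≤ ⨆ i ∈ s, sepEnt T (K i) ε := by
  calc sepEnt T L ε = expGrowthSup (fun n => (sepNum T n L ε : ℝ≥0∞)) :=
        sepEnt_eq_expGrowthSup hε hLne
    _ ≤ expGrowthSup (∑ i ∈ s, fun n => (sepNum T n (K i) ε : ℝ≥0∞)) :=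
        expGrowthSup_monotone fun n => by
          simpa only [Finset.sum_apply] using
            (Nat.cast_le.2 (sepNum_le_sum_of_subset_biUnion hε hL)).trans_eq (Nat.cast_sum _ _)
    _ = ⨆ i ∈ s, sepEnt T (K i) ε := by
        rw [expGrowthSup_sum]
        exact biSup_congr fun i hi => (sepEnt_eq_expGrowthSup hε (hK i hi)).symm

lemma sepEnt_univ_eq_iSup_locEnt [Nonempty X] (T : X → X) (hε : 0 < ε) :
    sepEnt T univ ε = ⨆ x : X, locEnt T x ε := by
  refine le_antisymm (le_of_forall_gt_imp_ge_of_dense fun b hb => ?_)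
    (iSup_le fun x => iInf₂_le univ ⟨isClosed_univ, univ_mem⟩)
  have hnbhd : ∀ x, ∃ K ∈ {K : Set X | IsClosed K ∧ K ∈ 𝓝 x}, sepEnt T K ε < b := fun x => by
    simpa only [locEnt, iInf_lt_iff, exists_prop] using
      (le_iSup (fun x => locEnt T x ε) x).trans_lt hb
  choose K hK hKb using hnbhd
  obtain ⟨s, -, hs⟩ := isCompact_univ.elim_nhds_subcover K fun x _ => (hK x).2
  calc sepEnt T univ ε ≤ ⨆ x ∈ s, sepEnt T (K x) ε :=
        sepEnt_le_biSup_of_subset_biUnion hε hs univ_nonempty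
          fun x _ => ⟨x, mem_of_mem_nhds (hK x).2⟩
    _ ≤ b := iSup₂_le fun x _ => (hKb x).le

end SeparatedSets

section Theorems

variable [MetricSpace X] [CompactSpace X] [Nonempty X] [MeasurableSpace X] [BorelSpace X]

theorem upper_mdim_eq_limsup_locEnt_general (T : X → X) :
    mdimUpper T = limsup (fun ε : ℝ =>
      (⨆ x : X, locEnt T x ε) / ((Real.log (1 / ε) : ℝ) : EReal)) (𝓝[>] (0:ℝ)) := by
  refine limsup_congr ?_
  filter_upwards [self_mem_nhdsWithin] with ε (hε : 0 < ε)
  rw [sepEnt_univ_eq_iSup_locEnt T hε]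

/-- The upper metric mean dimension in terms of the local entropy function
(Theorem 7.1). -/
theorem upper_mdim_eq_limsup_locEnt (T : X → X) (hT : IsHomeomorph T) :
    mdimUpper T = limsup (fun ε : ℝ =>
      (⨆ x : X, locEnt T x ε) / ((Real.log (1 / ε) : ℝ) : EReal)) (𝓝[>] (0:ℝ)) :=
  upper_mdim_eq_limsup_locEnt_general T

end Theorems
end

section
/- Let (X, d, T) be a topological dynamical system, ε > 0, and let K be a nonempty closed subset of X. Then sup_{x ∈ K} h̃_d(x, ε) ≥ R(K, ε), where h̃_d(x,ε) = inf{ R(K',ε) : K' a closed neighborhood of x }. -/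
/-!
`R(·, ε)` is monotone and, since `r_n(K ∪ K', ε) ≤ 2 max (r_n(K, ε), r_n(K', ε))` and
`(log 2) / n → 0`, it is stable under finite unions: `R(K ∪ K', ε) ≤ max (R(K, ε), R(K', ε))`.
If `a` exceeds every `h̃_d(x, ε)` with `x ∈ K`, each such `x` has a neighbourhood `K'` with
`R(K', ε) < a`; finitely many of them cover the compact set `K`, so `R(K, ε) ≤ a`.
-/

open Filter MeasureTheory Set Topology

variable {X : Type*}

lemma monotone_log_natCast : Monotone fun m : ℕ => Real.log m := by
  intro m m' h
  rcases Nat.eq_zero_or_pos m with rfl | hm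
  · simpa using Real.log_natCast_nonneg m'
  · exact Real.log_le_log (by exact_mod_cast hm) (by exact_mod_cast h)

lemma log_natCast_le_log_two_add_max {a b c : ℕ} (h : c ≤ a + b) :
    Real.log c ≤ Real.log 2 + max (Real.log a) (Real.log b) := by
  rcases Nat.eq_zero_or_pos c with rfl | hc
  · simpa using add_nonneg (Real.log_nonneg one_le_two)
      (le_max_of_le_left (Real.log_natCast_nonneg a))
  · have hmax : 0 < max a b := by omega
    calc Real.log c ≤ Real.log ((2 * max a b : ℕ) : ℝ) :=
          monotone_log_natCast (by omega)
      _ = Real.log 2 + Real.log (max a b : ℕ) := by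
          rw [Nat.cast_mul, Nat.cast_two, Real.log_mul two_ne_zero (by positivity)]
      _ = Real.log 2 + max (Real.log a) (Real.log b) := by
          rw [monotone_log_natCast.map_max]

lemma limsup_log_div_mono {a b : ℕ → ℕ} (h : ∀ n, a n ≤ b n) :
    limsup (fun n : ℕ => ((Real.log (a n) / n : ℝ) : EReal)) atTop ≤
      limsup (fun n : ℕ => ((Real.log (b n) / n : ℝ) : EReal)) atTop :=
  limsup_le_limsup <| Eventually.of_forall fun n => EReal.coe_le_coe_iff.mpr <|
    div_le_div_of_nonneg_right (monotone_log_natCast (h n)) n.cast_nonneg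

lemma limsup_log_div_le_max {a b c : ℕ → ℕ} (h : ∀ n, c n ≤ a n + b n) :
    limsup (fun n : ℕ => ((Real.log (c n) / n : ℝ) : EReal)) atTop ≤
      max (limsup (fun n : ℕ => ((Real.log (a n) / n : ℝ) : EReal)) atTop)
        (limsup (fun n : ℕ => ((Real.log (b n) / n : ℝ) : EReal)) atTop) := by
  set u : ℕ → EReal := fun n => ((Real.log 2 / n : ℝ) : EReal)
  have hu : limsup u atTop = 0 :=
    (EReal.tendsto_coe.mpr (tendsto_const_div_atTop_nhds_zero_nat (Real.log 2))).limsup_eq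
  have hle : ∀ n : ℕ, ((Real.log (c n) / n : ℝ) : EReal) ≤
      u n + max ((Real.log (a n) / n : ℝ) : EReal) ((Real.log (b n) / n : ℝ) : EReal) := by
    intro n
    rw [← EReal.coe_strictMono.monotone.map_max, ← EReal.coe_add, EReal.coe_le_coe_iff,
      max_div_div_right n.cast_nonneg, ← add_div]
    exact div_le_div_of_nonneg_right (log_natCast_le_log_two_add_max (h n)) n.cast_nonneg
  calc _ ≤ limsup (fun n => u n + max ((Real.log (a n) / n : ℝ) : EReal)
          ((Real.log (b n) / n : ℝ) : EReal)) atTop :=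
        limsup_le_limsup (Eventually.of_forall hle)
    _ ≤ limsup u atTop + limsup (fun n => max ((Real.log (a n) / n : ℝ) : EReal)
          ((Real.log (b n) / n : ℝ) : EReal)) atTop :=
        EReal.limsup_add_le (Or.inl (by simp [hu])) (Or.inl (by simp [hu]))
    _ = _ := by rw [hu, zero_add, limsup_max]

section Spanning

variable [MetricSpace X] {T : X → X} {n : ℕ} {ε : ℝ}

lemma dynDist_le_of_forall_dist_le {x y : X} (hε : 0 ≤ ε)
    (h : ∀ k < n, dist (T^[k] x) (T^[k] y) ≤ ε) : dynDist T n x y ≤ ε :=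
  Real.iSup_le (fun k => Real.iSup_le (fun hk => h k (Finset.mem_range.mp hk)) hε) hε

lemma spanNum_le_card {K : Set X} {F : Finset X}
    (hF : ∀ x ∈ K, ∃ y ∈ F, dynDist T n x y ≤ ε) : spanNum T n K ε ≤ F.card :=
  Nat.sInf_le ⟨F, hF, rfl⟩

/-- Embedding `X` into `Fin n → X` by `n`-orbits turns `d_n` into the sup metric, in which
the compact space `X^n` is totally bounded. -/
lemma exists_finset_forall_dynDist_le [CompactSpace X] (T : X → X) (n : ℕ) (hε : 0 < ε)
    (K : Set X) : ∃ F : Finset X, ∀ x ∈ K, ∃ y ∈ F, dynDist T n x y ≤ ε := by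
  let orbit : X → Fin n → X := fun x k => T^[k] x
  obtain ⟨t, -, ht, hcover⟩ := exists_subset_image_finite_and.mp <|
    Metric.finite_approx_of_totallyBounded (isCompact_univ.totallyBounded.subset (subset_univ
      (orbit '' univ))) ε hε
  refine ⟨ht.toFinset, fun x _ => ?_⟩
  obtain ⟨_, ⟨y, hy, rfl⟩, hxy⟩ := mem_iUnion₂.mp (hcover (mem_image_of_mem orbit (mem_univ x)))
  refine ⟨y, ht.mem_toFinset.mpr hy, dynDist_le_of_forall_dist_le hε.le fun k hk => ?_⟩
  exact ((dist_pi_lt_iff hε).mp (Metric.mem_ball.mp hxy) ⟨k, hk⟩).le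

lemma exists_finset_card_eq_spanNum [CompactSpace X] (T : X → X) (n : ℕ) (hε : 0 < ε)
    (K : Set X) :
    ∃ F : Finset X, (∀ x ∈ K, ∃ y ∈ F, dynDist T n x y ≤ ε) ∧ F.card = spanNum T n K ε :=
  let ⟨F, hF⟩ := exists_finset_forall_dynDist_le T n hε K
  Nat.sInf_mem (s := {m | ∃ F : Finset X, (∀ x ∈ K, ∃ y ∈ F, dynDist T n x y ≤ ε) ∧ F.card = m})
    ⟨F.card, F, hF, rfl⟩

lemma spanNum_mono [CompactSpace X] (hε : 0 < ε) {K K' : Set X} (h : K ⊆ K') :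
    spanNum T n K ε ≤ spanNum T n K' ε := by
  obtain ⟨F, hF, hcard⟩ := exists_finset_card_eq_spanNum T n hε K'
  exact hcard ▸ spanNum_le_card fun x hx => hF x (h hx)

lemma spanNum_union_le [CompactSpace X] (hε : 0 < ε) (K K' : Set X) :
    spanNum T n (K ∪ K') ε ≤ spanNum T n K ε + spanNum T n K' ε := by
  classical
  obtain ⟨F, hF, hcard⟩ := exists_finset_card_eq_spanNum T n hε K
  obtain ⟨F', hF', hcard'⟩ := exists_finset_card_eq_spanNum T n hε K'
  calc spanNum T n (K ∪ K') ε ≤ (F ∪ F').card := by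
        refine spanNum_le_card fun x hx => ?_
        rcases hx with hx | hx
        · exact (hF x hx).imp fun y hy => ⟨Finset.mem_union_left _ hy.1, hy.2⟩
        · exact (hF' x hx).imp fun y hy => ⟨Finset.mem_union_right _ hy.1, hy.2⟩
    _ ≤ F.card + F'.card := Finset.card_union_le _ _
    _ = _ := by rw [hcard, hcard']

lemma spanEnt_nonneg (K : Set X) : 0 ≤ spanEnt T K ε :=
  le_limsup_of_frequently_le <| Frequently.of_forall fun n => EReal.coe_nonneg.mpr <|
    div_nonneg (Real.log_natCast_nonneg _) n.cast_nonneg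

lemma spanEnt_empty : spanEnt T ∅ ε = 0 := by
  have hzero : ∀ n, spanNum T n (∅ : Set X) ε = 0 := fun n =>
    Nat.le_zero.mp (spanNum_le_card (F := ∅) (by simp))
  simp [spanEnt, hzero]

lemma spanEnt_mono [CompactSpace X] (hε : 0 < ε) {K K' : Set X} (h : K ⊆ K') :
    spanEnt T K ε ≤ spanEnt T K' ε :=
  limsup_log_div_mono fun _ => spanNum_mono hε h

lemma spanEnt_union_le [CompactSpace X] (hε : 0 < ε) (K K' : Set X) :
    spanEnt T (K ∪ K') ε ≤ max (spanEnt T K ε) (spanEnt T K' ε) :=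
  limsup_log_div_le_max fun _ => spanNum_union_le hε K K'

lemma spanEnt_biUnion_le [CompactSpace X] (hε : 0 < ε) {ι : Type*} (s : Finset ι)
    {f : ι → Set X} {a : EReal} (ha : 0 ≤ a) (h : ∀ i ∈ s, spanEnt T (f i) ε ≤ a) :
    spanEnt T (⋃ i ∈ s, f i) ε ≤ a := by
  classical
  induction s using Finset.induction_on with
  | empty => simpa [spanEnt_empty] using ha
  | insert i s _ ih =>
    rw [Finset.set_biUnion_insert]
    exact (spanEnt_union_le hε _ _).trans <| max_le (h i (Finset.mem_insert_self i s))
      (ih fun j hj => h j (Finset.mem_insert_of_mem hj))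

lemma locSpanEnt_nonneg (x : X) : 0 ≤ locSpanEnt T x ε :=
  le_iInf₂ fun K _ => spanEnt_nonneg K

lemma exists_mem_nhds_spanEnt_lt_of_locSpanEnt_lt {x : X} {a : EReal}
    (h : locSpanEnt T x ε < a) : ∃ K ∈ 𝓝 x, spanEnt T K ε < a := by
  simp only [locSpanEnt, iInf_lt_iff] at h
  obtain ⟨K, ⟨-, hK⟩, hlt⟩ := h
  exact ⟨K, hK, hlt⟩

end Spanning

section Theorems

variable [MetricSpace X] [CompactSpace X] [Nonempty X] [MeasurableSpace X] [BorelSpace X]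

theorem spanEnt_le_iSup_locSpanEnt_general (T : X → X)
    (ε : ℝ) (hε : 0 < ε) (K : Set X) (hK : IsClosed K) (hKne : K.Nonempty) :
    spanEnt T K ε ≤ ⨆ x ∈ K, locSpanEnt T x ε := by
  refine le_of_forall_gt_imp_ge_of_dense fun a ha => ?_
  have hlt : ∀ x ∈ K, locSpanEnt T x ε < a := fun x hx =>
    (le_iSup₂ (f := fun x _ => locSpanEnt T x ε) x hx).trans_lt ha
  have ha0 : 0 ≤ a := (locSpanEnt_nonneg hKne.some).trans (hlt _ hKne.some_mem).le
  choose U hU hUa using fun x hx => exists_mem_nhds_spanEnt_lt_of_locSpanEnt_lt (hlt x hx)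
  obtain ⟨s, hs⟩ := hK.isCompact.elim_nhds_subcover' U hU
  calc spanEnt T K ε ≤ spanEnt T (⋃ x ∈ s, U x x.2) ε := spanEnt_mono hε hs
    _ ≤ a := spanEnt_biUnion_le hε s ha0 fun x _ => (hUa x x.2).le

/-- On a nonempty closed set `K`, the supremum of the local spanning entropy function
dominates the spanning entropy `R(K, ε)` (Lemma 7.2). -/
theorem spanEnt_le_iSup_locSpanEnt (T : X → X) (hT : IsHomeomorph T)
    (ε : ℝ) (hε : 0 < ε) (K : Set X) (hK : IsClosed K) (hKne : K.Nonempty) :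
    spanEnt T K ε ≤ ⨆ x ∈ K, locSpanEnt T x ε :=
  spanEnt_le_iSup_locSpanEnt_general T ε hε K hK hKne

end Theorems
end
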